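/- The map X : ℝ² → ℝ², X(a₁,a₂) = (X₁(a₁,a₂), X₂(a₁,a₂)), is differentiable, and for every (a₁,a₂) ∈ ℝ² the absolute value of the determinant of its Jacobian matrix at (a₁,a₂) equals 4π²·|S_ρ(a₁,a₂)|. -/

import Mathlib

open Real

noncomputable section

/-- `X₁` for `G₂`. -/
def X1 (a : ℝ × ℝ) : ℝ :=
  2 * (Real.cos (2 * π * a.1) + Real.cos (2 * π * (a.1 - 3 * a.2)) +
    Real.cos (2 * π * (2 * a.1 - 3 * a.2)))

/-- `X₂` for `G₂`. -/
def X2 (a : ℝ × ℝ) : ℝ :=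
  2 * (Real.cos (2 * π * a.2) + Real.cos (2 * π * (a.1 - a.2)) +
    Real.cos (2 * π * (a.1 - 2 * a.2)))

/-- The `X`-transform of `G₂`. -/
def Xmap (a : ℝ × ℝ) : ℝ × ℝ := (X1 a, X2 a)

/-- The lowest antisymmetric orbit function `S_ρ` of `G₂`. -/
def Srho (a : ℝ × ℝ) : ℝ :=
  2 * (Real.cos (2 * π * (a.1 + a.2)) - Real.cos (2 * π * (-a.1 + 4 * a.2)) -
    Real.cos (2 * π * (2 * a.1 - a.2)) + Real.cos (2 * π * (3 * a.1 - 4 * a.2)) +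
    Real.cos (2 * π * (-2 * a.1 + 5 * a.2)) - Real.cos (2 * π * (-3 * a.1 + 5 * a.2)))

/-! `X₁` and `X₂` are sums of `cos 2π⟨λ, a⟩` over half of a Weyl orbit of weights `λ`, so the
rows of the Jacobian are `-4π Σ_λ sin 2π⟨λ, a⟩ λ` and its determinant is
`16π² Σ_{λ, μ} det(λ, μ) sin 2π⟨λ, a⟩ sin 2π⟨μ, a⟩`. The product-to-sum formula turns this into
a sum of cosines in which everything outside the orbit of `ρ` cancels, leaving `-4π² S_ρ`. -/

theorem ContinuousLinearMap.det_prod_finTwo {R : Type*} [CommRing R] [TopologicalSpace R]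
    (f g : R × R →L[R] R) : (f.prod g).det = f (1, 0) * g (0, 1) - f (0, 1) * g (1, 0) := by
  rw [det, coe_prod, ← LinearMap.det_toMatrix (Module.Basis.finTwoProd R), Matrix.det_fin_two]
  simp [LinearMap.toMatrix_apply]

def cosLin (m n : ℝ) (a : ℝ × ℝ) : ℝ := Real.cos (2 * π * (m * a.1 + n * a.2))

def sinLin (m n : ℝ) (a : ℝ × ℝ) : ℝ := Real.sin (2 * π * (m * a.1 + n * a.2))

theorem sinLin_mul_sinLin (m n m' n' : ℝ) (a : ℝ × ℝ) :
    sinLin m n a * sinLin m' n' a =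
      (cosLin (m - m') (n - n') a - cosLin (m + m') (n + n') a) / 2 := by
  simp only [sinLin, cosLin]
  rw [show 2 * π * ((m - m') * a.1 + (n - n') * a.2) =
      2 * π * (m * a.1 + n * a.2) - 2 * π * (m' * a.1 + n' * a.2) by ring,
    show 2 * π * ((m + m') * a.1 + (n + n') * a.2) =
      2 * π * (m * a.1 + n * a.2) + 2 * π * (m' * a.1 + n' * a.2) by ring,
    Real.cos_sub, Real.cos_add]
  ring

theorem hasFDerivAt_cosLin (m n : ℝ) (a : ℝ × ℝ) :
    HasFDerivAt (cosLin m n)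
      ((-(2 * π * sinLin m n a)) • (m • ContinuousLinearMap.fst ℝ ℝ ℝ +
        n • ContinuousLinearMap.snd ℝ ℝ ℝ)) a := by
  have hlin : HasFDerivAt (fun a : ℝ × ℝ ↦ 2 * π * (m * a.1 + n * a.2))
      ((2 * π) • (m • ContinuousLinearMap.fst ℝ ℝ ℝ + n • ContinuousLinearMap.snd ℝ ℝ ℝ)) a :=
    ((hasFDerivAt_fst.const_mul m).add (hasFDerivAt_snd.const_mul n)).const_mul (2 * π)
  refine hlin.cos.congr_fderiv ?_
  rw [smul_smul, sinLin]
  congr 1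
  ring

theorem X1_eq : X1 = fun a ↦ 2 * (cosLin 1 0 a + cosLin 1 (-3) a + cosLin 2 (-3) a) := by
  ext a; simp only [X1, cosLin]; ring_nf

theorem X2_eq : X2 = fun a ↦ 2 * (cosLin 0 1 a + cosLin 1 (-1) a + cosLin 1 (-2) a) := by
  ext a; simp only [X2, cosLin]; ring_nf

theorem Srho_eq (a : ℝ × ℝ) : Srho a = 2 * (cosLin 1 1 a - cosLin 1 (-4) a - cosLin 2 (-1) a +
    cosLin 3 (-4) a + cosLin 2 (-5) a - cosLin 3 (-5) a) := by
  simp only [Srho, cosLin]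
  rw [← Real.cos_neg (2 * π * (1 * a.1 + -4 * a.2)), ← Real.cos_neg (2 * π * (2 * a.1 + -5 * a.2)),
    ← Real.cos_neg (2 * π * (3 * a.1 + -5 * a.2))]
  ring_nf

/-- The `X`-transform of `G₂` is differentiable and the absolute value of
its Jacobian determinant equals `4π²·|S_ρ|`. -/
theorem jacobian_G2 :
    Differentiable ℝ Xmap ∧
    ∀ a : ℝ × ℝ, |(fderiv ℝ Xmap a).det| = 4 * π ^ 2 * |Srho a| := by
  have hX (a : ℝ × ℝ) : HasFDerivAt Xmap _ a :=
    (X1_eq ▸ (((hasFDerivAt_cosLin 1 0 a).add (hasFDerivAt_cosLin 1 (-3) a)).add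
      (hasFDerivAt_cosLin 2 (-3) a)).const_mul 2).prodMk
    (X2_eq ▸ (((hasFDerivAt_cosLin 0 1 a).add (hasFDerivAt_cosLin 1 (-1) a)).add
      (hasFDerivAt_cosLin 1 (-2) a)).const_mul 2)
  refine ⟨fun a ↦ (hX a).differentiableAt, fun a ↦ ?_⟩
  have hdet : (fderiv ℝ Xmap a).det = -(4 * π ^ 2) * Srho a := by
    rw [(hX a).fderiv, ContinuousLinearMap.det_prod_finTwo, Srho_eq]
    simp only [add_apply, smul_apply, ContinuousLinearMap.coe_fst', ContinuousLinearMap.coe_snd',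
      smul_eq_mul]
    -- the pair `(λ, μ)` enters with coefficient `16π² det(λ, μ)`; the factors are ordered so that
    -- every cosine produced carries the weight chosen in `Srho_eq`, not its negative
    linear_combination (norm := ring_nf) (16 * π ^ 2) * sinLin_mul_sinLin 1 0 0 1 a
      - (16 * π ^ 2) * sinLin_mul_sinLin 1 0 1 (-1) a
      - (32 * π ^ 2) * sinLin_mul_sinLin 1 0 1 (-2) a
      + (16 * π ^ 2) * sinLin_mul_sinLin 1 (-3) 0 1 a
      + (32 * π ^ 2) * sinLin_mul_sinLin 1 (-1) 1 (-3) a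
      + (16 * π ^ 2) * sinLin_mul_sinLin 1 (-2) 1 (-3) a
      + (32 * π ^ 2) * sinLin_mul_sinLin 2 (-3) 0 1 a
      + (16 * π ^ 2) * sinLin_mul_sinLin 2 (-3) 1 (-1) a
      - (16 * π ^ 2) * sinLin_mul_sinLin 2 (-3) 1 (-2) a
  rw [hdet, abs_mul, abs_neg, abs_of_pos (by positivity)]

end
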